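/- Let P and Q be probability measures on a measurable space with P ≪ Q, and let f : 𝒳 → ℝ be measurable with 0 < E_Q[e^{f(X)}] < ∞. Then E_P[f(X)] − log E_Q[e^{f(X)}] ≤ D_KL(P ‖ Q). Moreover, if D_KL(P ‖ Q) < ∞ and f = log(dP/dQ) + c for a constant c (on the support of P), equality holds. -/

import Mathlib

/-!
The gap `∫ llr P Q ∂P - (∫ f ∂P - log ∫ exp f ∂Q)` is the relative entropy of `P` with respect
to the tilted probability measure `Q.tilted f`, whose density with respect to `Q` is
`exp f / ∫ exp f ∂Q`; it is therefore nonnegative by Gibbs' inequality. When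
`f = log (dP/dQ) + c` with `dP/dQ > 0`, the tilted measure is `P` itself and the gap vanishes.
-/

open MeasureTheory Real InformationTheory

namespace MeasureTheory

variable {α : Type*} [MeasurableSpace α] {μ ν : Measure α} {f : α → ℝ}

theorem integral_sub_log_integral_exp_le_integral_llr [IsProbabilityMeasure μ]
    [SigmaFinite ν] (hμν : μ ≪ ν) (hfμ : Integrable f μ)
    (hfν : Integrable (fun x ↦ exp (f x)) ν) (h_int : Integrable (llr μ ν) μ) :
    ∫ x, f x ∂μ - log (∫ x, exp (f x) ∂ν) ≤ ∫ x, llr μ ν x ∂μ := by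
  have : NeZero ν :=
    ⟨fun hν ↦ IsProbabilityMeasure.ne_zero μ (Measure.absolutelyContinuous_zero_iff.mp (hν ▸ hμν))⟩
  have : IsProbabilityMeasure (ν.tilted f) := isProbabilityMeasure_tilted hfν
  have gibbs := integral_llr_add_sub_measure_univ_nonneg
    (hμν.trans (absolutelyContinuous_tilted hfν)) (integrable_llr_tilted_right hμν hfμ h_int hfν)
  rw [integral_llr_tilted_right hμν hfμ hfν h_int] at gibbs
  simp only [probReal_univ] at gibbs
  linarith

theorem integral_exp_llr_add_const [IsProbabilityMeasure μ] [SigmaFinite ν] (hμν : μ ≪ ν)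
    (hpos : ∀ᵐ x ∂ν, 0 < μ.rnDeriv ν x) (c : ℝ) :
    ∫ x, exp (llr μ ν x + c) ∂ν = exp c := by
  have hexp : (fun x ↦ exp (llr μ ν x + c)) =ᵐ[ν] fun x ↦ (μ.rnDeriv ν x).toReal * exp c := by
    filter_upwards [exp_llr μ ν, hpos] with x hx hx_pos
    rw [exp_add, hx, if_neg hx_pos.ne']
  rw [integral_congr_ae hexp, integral_mul_const, Measure.integral_toReal_rnDeriv hμν,
    probReal_univ, one_mul]

theorem integral_sub_log_integral_exp_eq_integral_llr [IsProbabilityMeasure μ] [SigmaFinite ν]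
    (hμν : μ ≪ ν) (h_int : Integrable (llr μ ν) μ) (hpos : ∀ᵐ x ∂ν, 0 < μ.rnDeriv ν x) {c : ℝ}
    (hf : ∀ᵐ x ∂ν, f x = llr μ ν x + c) :
    ∫ x, f x ∂μ - log (∫ x, exp (f x) ∂ν) = ∫ x, llr μ ν x ∂μ := by
  have hexp : ∫ x, exp (f x) ∂ν = exp c := by
    rw [integral_congr_ae (hf.mono fun x hx ↦ by rw [hx]), integral_exp_llr_add_const hμν hpos]
  rw [hexp, log_exp, integral_congr_ae (hμν.ae_le hf), integral_add h_int (integrable_const c),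
    integral_const, probReal_univ, one_smul, add_sub_cancel_right]

end MeasureTheory

theorem stmt_7_general {𝒳 : Type*} [MeasurableSpace 𝒳]
    (P Q : Measure 𝒳) [IsProbabilityMeasure P] [IsProbabilityMeasure Q]
    (hac : P ≪ Q)
    (f : 𝒳 → ℝ)
    (hfint : Integrable f P)
    (hexp : Integrable (fun x => Real.exp (f x)) Q)
    (D : ℝ)
    (hD : D = ∫ x, Real.log ((P.rnDeriv Q x).toReal) ∂P)
    (hlogint : Integrable (fun x => Real.log ((P.rnDeriv Q x).toReal)) P) :
    ((∫ x, f x ∂P) - Real.log (∫ x, Real.exp (f x) ∂Q) ≤ D) ∧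
    (∀ c : ℝ, (∀ᵐ x ∂Q, 0 < P.rnDeriv Q x) →
      (∀ᵐ x ∂Q, f x = Real.log ((P.rnDeriv Q x).toReal) + c) →
      (∫ x, f x ∂P) - Real.log (∫ x, Real.exp (f x) ∂Q) = D) := by
  subst hD
  exact ⟨integral_sub_log_integral_exp_le_integral_llr hac hfint hexp hlogint,
    fun _ hpos hf ↦ integral_sub_log_integral_exp_eq_integral_llr hac hlogint hpos hf⟩

/-- Donsker–Varadhan lower bound and attainment: Let `P, Q` be probability
measures with `P ≪ Q`, and `f` measurable with `0 < E_Q[e^f] < ∞` (here encoded via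
integrability of `e^f` under `Q` and positivity of the integral; we also assume `f` and
`log (dP/dQ)` are `P`-integrable so that all expectations are well defined).  With
`D = D_KL(P‖Q) = E_P[log (dP/dQ)]`, we have `E_P[f] - log E_Q[e^f] ≤ D`.  Moreover, if
`f = log (dP/dQ) + c` for a constant `c` on the support of `P` (formalized by requiring
`dP/dQ > 0` `Q`-a.e., i.e. the support is everything, and `f = log(dP/dQ) + c` a.e.),
equality holds. -/
theorem stmt_7 {𝒳 : Type*} [MeasurableSpace 𝒳]
    (P Q : Measure 𝒳) [IsProbabilityMeasure P] [IsProbabilityMeasure Q]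
    (hac : P ≪ Q)
    (f : 𝒳 → ℝ) (hfmeas : Measurable f)
    (hfint : Integrable f P)
    (hexp : Integrable (fun x => Real.exp (f x)) Q)
    (hpos : 0 < ∫ x, Real.exp (f x) ∂Q)
    (D : ℝ)
    (hD : D = ∫ x, Real.log ((P.rnDeriv Q x).toReal) ∂P)
    (hlogint : Integrable (fun x => Real.log ((P.rnDeriv Q x).toReal)) P) :
    ((∫ x, f x ∂P) - Real.log (∫ x, Real.exp (f x) ∂Q) ≤ D) ∧
    (∀ c : ℝ, (∀ᵐ x ∂Q, 0 < P.rnDeriv Q x) →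
      (∀ᵐ x ∂Q, f x = Real.log ((P.rnDeriv Q x).toReal) + c) →
      (∫ x, f x ∂P) - Real.log (∫ x, Real.exp (f x) ∂Q) = D) :=
  stmt_7_general P Q hac f hfint hexp D hD hlogint
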